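/- The incidence matrix Ê of the lifted graph Ĝ can be written in block form as [[E°,0,0],[S,𝟙,0],[0,𝟙,S],[0,0,E°]] (up to row/column permutation and signs), and consequently L(Ĝ) has the block structure [[E°ᵀE°+SᵀS, Sᵀ𝟙, 0],[𝟙ᵀS, 2q, 𝟙ᵀS],[0, Sᵀ𝟙, E°ᵀE°+SᵀS]], where q is the number of self-loops of G; in particular the top-left block equals L(G). -/

import Mathlib

/-- The Laplacian of a graph with self-loops: the Laplacian of the self-loop-free
part `G°` plus `e_i e_iᵀ` for each self-loop `(i,i)`, encoded as loop set `s`. -/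
def loopLaplacian {N : ℕ} (G : SimpleGraph (Fin N)) [DecidableRel G.Adj]
    (s : Finset (Fin N)) : Matrix (Fin N) (Fin N) ℝ :=
  G.lapMatrix ℝ + Matrix.diagonal (fun i => if i ∈ s then 1 else 0)

/-- The lifted graph of a graph with self-loops `(G, s)` on `N` vertices: a simple
graph on `2N + 1` vertices (two copies of the vertex set plus a middle vertex).
Each non-loop edge `(i,j)` yields edges `(i,j)` and `(i+N+1, j+N+1)`; each
self-loop `(i,i)` yields edges `(i, N+1)` and `(N+1, i+N+1)`, where `N+1` denotes
the middle vertex. -/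
def liftedGraph {N : ℕ} (G : SimpleGraph (Fin N)) (s : Finset (Fin N)) :
    SimpleGraph (Fin N ⊕ Unit ⊕ Fin N) where
  Adj a b :=
    match a, b with
    | Sum.inl i, Sum.inl j => G.Adj i j
    | Sum.inl i, Sum.inr (Sum.inl _) => i ∈ s
    | Sum.inr (Sum.inl _), Sum.inl i => i ∈ s
    | Sum.inr (Sum.inl _), Sum.inr (Sum.inr i) => i ∈ s
    | Sum.inr (Sum.inr i), Sum.inr (Sum.inl _) => i ∈ s
    | Sum.inr (Sum.inr i), Sum.inr (Sum.inr j) => G.Adj i j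
    | _, _ => False
  symm := ⟨by
    rintro (i | u | i) (j | v | j) h <;>
      first | exact h.symm | exact h | cases h⟩
  loopless := ⟨by
    rintro (i | u | i) h <;> first | exact G.irrefl h | cases h⟩

noncomputable instance {N : ℕ} (G : SimpleGraph (Fin N)) (s : Finset (Fin N)) :
    DecidableRel (liftedGraph G s).Adj := Classical.decRel _

/-- The Laplacian of the lifted graph (an ordinary loopless graph Laplacian). -/
noncomputable def liftedLaplacian {N : ℕ} (G : SimpleGraph (Fin N))
    (s : Finset (Fin N)) : Matrix (Fin N ⊕ Unit ⊕ Fin N) (Fin N ⊕ Unit ⊕ Fin N) ℝ :=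
  (liftedGraph G s).lapMatrix ℝ

/-! Whatever orientation is chosen, edge `(a, b)` contributes `(e_a - e_b)(e_a - e_b)ᵀ` to
`ÊᵀÊ`, i.e. `1` on the two diagonal entries `a, b` and `-1` at `(a, b)` and `(b, a)`; summing
over the edges gives the Laplacian. The block form is then read off from adjacency in `Ĝ` and
the degrees there: a copy of vertex `i` has degree `deg_G i + [i ∈ s]`, since the self-loop
becomes an edge to the middle vertex, and the middle vertex has degree `2q`. -/

open scoped Matrix

section SingleSubSingle

variable {V R : Type*} [DecidableEq V] [Ring R] {a b : V}

lemma single_sub_single_mul_self (hab : a ≠ b) (i : V) :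
    (Pi.single a 1 - Pi.single b 1 : V → R) i * (Pi.single a 1 - Pi.single b 1 : V → R) i =
      if i ∈ s(a, b) then 1 else 0 := by
  simp only [Pi.sub_apply, Pi.single_apply, Sym2.mem_iff]
  split_ifs <;> grind

lemma single_sub_single_mul_of_ne (hab : a ≠ b) {i j : V} (hij : i ≠ j) :
    (Pi.single a 1 - Pi.single b 1 : V → R) i * (Pi.single a 1 - Pi.single b 1 : V → R) j =
      -if s(a, b) = s(i, j) then 1 else 0 := by
  simp only [Pi.sub_apply, Pi.single_apply, Sym2.eq_iff]
  split_ifs <;> grind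

end SingleSubSingle

namespace SimpleGraph

variable {V : Type*} [DecidableEq V]

def orientedIncMatrix (R : Type*) [Ring R] {E : Type*} (o : E → V × V) : Matrix E V R :=
  Matrix.of fun e k => (Pi.single (o e).1 1 - Pi.single (o e).2 1 : V → R) k

variable {R : Type*} [Fintype V]

lemma lapMatrix_apply [AddGroupWithOne R] (H : SimpleGraph V) [DecidableRel H.Adj] (a b : V) :
    H.lapMatrix R a b = (if a = b then (H.degree a : R) else 0) - if H.Adj a b then 1 else 0 := by
  simp [lapMatrix, degMatrix, Matrix.diagonal_apply, adjMatrix_apply]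

theorem orientedIncMatrix_transpose_mul_self [Ring R] (H : SimpleGraph V) [DecidableRel H.Adj]
    [Fintype H.edgeSet] (o : H.edgeSet → V × V) (ho : ∀ e, s((o e).1, (o e).2) = e) :
    (orientedIncMatrix R o)ᵀ * orientedIncMatrix R o = H.lapMatrix R := by
  have hne (e : H.edgeSet) : (o e).1 ≠ (o e).2 :=
    (by simpa [← ho e] using e.2 : H.Adj _ _).ne
  ext i j
  simp only [Matrix.mul_apply, Matrix.transpose_apply, orientedIncMatrix, Matrix.of_apply,
    lapMatrix_apply]
  by_cases hij : i = j
  · subst hij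
    simp only [single_sub_single_mul_self (hne _), ho, if_true, H.irrefl]
    rw [Finset.sum_set_coe (f := fun e => if i ∈ e then (1 : R) else 0), Finset.sum_boole,
      ← edgeFinset.eq_1, ← incidenceFinset_eq_filter, card_incidenceFinset_eq_degree]
    simp
  · simp only [single_sub_single_mul_of_ne (hne _) hij, ho]
    rw [Finset.sum_set_coe (f := fun e => -if e = s(i, j) then (1 : R) else 0),
      Finset.sum_neg_distrib, Finset.sum_ite_eq']
    simp [hij]

end SimpleGraph

section LiftedGraph

variable {N : ℕ} (G : SimpleGraph (Fin N)) (s : Finset (Fin N)) (i j : Fin N) (u : Unit)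

@[simp] lemma liftedGraph_adj_inl_inl :
    (liftedGraph G s).Adj (.inl i) (.inl j) ↔ G.Adj i j := .rfl
@[simp] lemma liftedGraph_adj_inl_middle :
    (liftedGraph G s).Adj (.inl i) (.inr (.inl u)) ↔ i ∈ s := .rfl
@[simp] lemma liftedGraph_adj_inl_inr :
    ¬(liftedGraph G s).Adj (.inl i) (.inr (.inr j)) := id
@[simp] lemma liftedGraph_adj_middle_inl :
    (liftedGraph G s).Adj (.inr (.inl u)) (.inl i) ↔ i ∈ s := .rfl
@[simp] lemma liftedGraph_adj_middle_inr :
    (liftedGraph G s).Adj (.inr (.inl u)) (.inr (.inr i)) ↔ i ∈ s := .rfl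
@[simp] lemma liftedGraph_adj_inr_inl :
    ¬(liftedGraph G s).Adj (.inr (.inr i)) (.inl j) := id
@[simp] lemma liftedGraph_adj_inr_middle :
    (liftedGraph G s).Adj (.inr (.inr i)) (.inr (.inl u)) ↔ i ∈ s := .rfl
@[simp] lemma liftedGraph_adj_inr_inr :
    (liftedGraph G s).Adj (.inr (.inr i)) (.inr (.inr j)) ↔ G.Adj i j := .rfl

lemma liftedGraph_degree_middle :
    (liftedGraph G s).degree (.inr (.inl u)) = 2 * s.card := by
  have h := (liftedGraph G s).degree_eq_sum_if_adj (R := ℕ) (.inr (.inl u))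
  simp only [Nat.cast_id, Fintype.sum_sum_type] at h
  simp [h, two_mul]

variable [DecidableRel G.Adj]

lemma liftedGraph_degree_inl :
    (liftedGraph G s).degree (.inl i) = G.degree i + if i ∈ s then 1 else 0 := by
  have h := (liftedGraph G s).degree_eq_sum_if_adj (R := ℕ) (.inl i)
  simp only [Nat.cast_id, Fintype.sum_sum_type] at h
  simp [h, ← G.card_neighborFinset_eq_degree, G.neighborFinset_eq_filter]

lemma liftedGraph_degree_inr :
    (liftedGraph G s).degree (.inr (.inr i)) = G.degree i + if i ∈ s then 1 else 0 := by
  have h := (liftedGraph G s).degree_eq_sum_if_adj (R := ℕ) (.inr (.inr i))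
  simp only [Nat.cast_id, Fintype.sum_sum_type] at h
  simp [h, ← G.card_neighborFinset_eq_degree, G.neighborFinset_eq_filter, add_comm]

end LiftedGraph

theorem lifted_laplacian_block_structure
    {N : ℕ} (G : SimpleGraph (Fin N)) [DecidableRel G.Adj]
    (s : Finset (Fin N))
    [Fintype (liftedGraph G s).edgeSet] :
    (∃ (o : (liftedGraph G s).edgeSet →
          (Fin N ⊕ Unit ⊕ Fin N) × (Fin N ⊕ Unit ⊕ Fin N)),
        (∀ e, Sym2.mk (o e).1 (o e).2 = (e : Sym2 (Fin N ⊕ Unit ⊕ Fin N))) ∧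
        (Matrix.of fun (e : (liftedGraph G s).edgeSet) k =>
            Pi.single (o e).1 (1 : ℝ) k - Pi.single (o e).2 (1 : ℝ) k)ᵀ *
          (Matrix.of fun (e : (liftedGraph G s).edgeSet) k =>
            Pi.single (o e).1 (1 : ℝ) k - Pi.single (o e).2 (1 : ℝ) k) =
          liftedLaplacian G s) ∧
      liftedLaplacian G s = Matrix.of (fun a b =>
        match a, b with
        | Sum.inl i, Sum.inl j => loopLaplacian G s i j
        | Sum.inl i, Sum.inr (Sum.inl _) => -(if i ∈ s then (1 : ℝ) else 0)
        | Sum.inr (Sum.inl _), Sum.inl i => -(if i ∈ s then (1 : ℝ) else 0)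
        | Sum.inl _, Sum.inr (Sum.inr _) => 0
        | Sum.inr (Sum.inr _), Sum.inl _ => 0
        | Sum.inr (Sum.inl _), Sum.inr (Sum.inl _) => 2 * (s.card : ℝ)
        | Sum.inr (Sum.inl _), Sum.inr (Sum.inr i) => -(if i ∈ s then (1 : ℝ) else 0)
        | Sum.inr (Sum.inr i), Sum.inr (Sum.inl _) => -(if i ∈ s then (1 : ℝ) else 0)
        | Sum.inr (Sum.inr i), Sum.inr (Sum.inr j) => loopLaplacian G s i j) := by
  refine ⟨⟨fun e => Quot.out (e : Sym2 _), fun e => Quot.out_eq _,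
    (liftedGraph G s).orientedIncMatrix_transpose_mul_self _ fun e => Quot.out_eq _⟩, ?_⟩
  ext (i | u | i) (j | v | j) <;>
    simp [liftedLaplacian, SimpleGraph.lapMatrix_apply, loopLaplacian, Matrix.diagonal_apply,
      liftedGraph_degree_inl, liftedGraph_degree_inr, liftedGraph_degree_middle] <;>
    split_ifs <;> ring
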